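/- arXiv:2101.01427 — 5 statements merged into one kernel-verified Lean document; each statement's English description precedes it below -/
import Mathlib

section
/- Let X be a topological space and let A be a subalgebra of the algebra of bounded continuous real-valued functions on X which contains the constant functions, separates the points of X, and separates points from closed sets. Then there exists a compactification (X̊, ι) of X such that: (i) every f ∈ A has a unique continuous extension f̊ : X̊ → ℝ with f̊ ∘ ι = f; (ii) the family of extensions {f̊ : f ∈ A} separates the points of X̊; and (iii) {f̊ : f ∈ A} is dense in the space C(X̊, ℝ) of continuous real-valued functions on X̊ with the supremum norm. -/
/-- Given a subalgebra `A` of the bounded continuous real functions on a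
topological space `X` which (contains the constants, being a subalgebra,) separates the points
of `X` and separates points from closed sets, there is a compactification `(K, ι)` of `X`
(a compact Hausdorff space together with a dense topological embedding) such that every
`f ∈ A` extends uniquely to a continuous function on `K`, the extensions separate the points
of `K`, and the extensions are dense in `C(K, ℝ)` with the sup norm (phrased as uniform
approximation). -/
theorem stmt_0 {X : Type u} [TopologicalSpace X]
    (A : Subalgebra ℝ (BoundedContinuousFunction X ℝ))
    (hsepPts : ∀ x y : X, x ≠ y → ∃ f ∈ A, f x ≠ f y)
    (hsepClosed : ∀ C : Set X, IsClosed C → ∀ x ∉ C,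
      ∃ f ∈ A, f x = 1 ∧ ∀ y ∈ C, f y = 0) :
    ∃ (K : Type u) (_ : TopologicalSpace K) (_ : CompactSpace K) (_ : T2Space K)
      (ι : X → K),
      Topology.IsEmbedding ι ∧ DenseRange ι ∧
      (∀ f ∈ A, ∃! F : K → ℝ, Continuous F ∧ ∀ x, F (ι x) = f x) ∧
      (∀ z w : K, z ≠ w → ∃ f ∈ A, ∃ F : K → ℝ,
        Continuous F ∧ (∀ x, F (ι x) = f x) ∧ F z ≠ F w) ∧
      (∀ G : K → ℝ, Continuous G → ∀ ε > 0, ∃ f ∈ A, ∃ F : K → ℝ,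
        Continuous F ∧ (∀ x, F (ι x) = f x) ∧ ∀ z, |F z - G z| ≤ ε) := by
  classical
  -- evaluation map into the product
  set e : X → (A → ℝ) := fun x a => (a : BoundedContinuousFunction X ℝ) x with he_def
  have he_cont : Continuous e := by
    apply continuous_pi
    intro a
    exact (a : BoundedContinuousFunction X ℝ).continuous
  set S : Set (A → ℝ) := closure (Set.range e) with hS_def
  -- compactness of S
  have hS_sub : S ⊆ Set.univ.pi (fun a : A => Set.Icc (-‖(a : BoundedContinuousFunction X ℝ)‖)
      ‖(a : BoundedContinuousFunction X ℝ)‖) := by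
    apply closure_minimal
    · rintro _ ⟨x, rfl⟩ a _
      have := (a : BoundedContinuousFunction X ℝ).norm_coe_le_norm x
      rw [Real.norm_eq_abs, abs_le] at this
      exact this
    · exact isClosed_set_pi (fun a _ => isClosed_Icc)
  have hS_cpt : IsCompact S := by
    refine IsCompact.of_isClosed_subset (isCompact_univ_pi fun a => isCompact_Icc)
      isClosed_closure hS_sub
  -- K and ι
  refine ⟨S, inferInstance, isCompact_iff_compactSpace.mp hS_cpt, inferInstance,
    fun x => ⟨e x, subset_closure ⟨x, rfl⟩⟩, ?_, ?_, ?_, ?_, ?_⟩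
  · -- embedding
    have hind : Topology.IsInducing e := by
      rw [Topology.isInducing_iff_nhds]
      intro x
      refine le_antisymm (he_cont.tendsto x).le_comap ?_
      intro U hU
      rcases mem_nhds_iff.mp hU with ⟨V, hVU, hVopen, hxV⟩
      rcases hsepClosed Vᶜ hVopen.isClosed_compl x (by simpa using hxV) with ⟨f, hfA, hfx, hf0⟩
      refine Filter.mem_of_superset (Filter.preimage_mem_comap
        (show {z : A → ℝ | z ⟨f, hfA⟩ ≠ 0} ∈ nhds (e x) from ?_)) ?_
      · have : IsOpen {z : A → ℝ | z ⟨f, hfA⟩ ≠ 0} :=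
          isOpen_ne.preimage (continuous_apply (⟨f, hfA⟩ : A))
        exact this.mem_nhds (by simp [he_def, hfx])
      · intro y hy
        simp only [Set.mem_preimage, Set.mem_setOf_eq, he_def] at hy
        by_contra hyU
        exact hy (hf0 y (fun hyV => hyU (hVU hyV)))
    have hinj : Function.Injective e := by
      intro x y hxy
      by_contra hne
      rcases hsepPts x y hne with ⟨f, hfA, hf⟩
      exact hf (congrFun hxy ⟨f, hfA⟩)
    have he_emb : Topology.IsEmbedding e := ⟨hind, hinj⟩
    exact Topology.IsEmbedding.of_comp (he_cont.subtype_mk _) continuous_subtype_val he_emb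
  · -- dense range
    intro z
    rw [mem_closure_iff_nhds]
    intro U hU
    rcases (mem_nhds_subtype _ _ _).mp hU with ⟨V, hV, hVU⟩
    have hz : (z : A → ℝ) ∈ closure (Set.range e) := z.2
    rcases mem_closure_iff_nhds.mp hz V hV with ⟨w, hwV, x, hx⟩
    refine ⟨⟨w, hx ▸ subset_closure ⟨x, rfl⟩⟩, hVU hwV, ⟨x, by simp [Subtype.ext_iff, hx]⟩⟩
  · -- unique extension
    intro f hf
    refine ⟨fun z => (z : A → ℝ) ⟨f, hf⟩,
      ⟨(continuous_apply (⟨f, hf⟩ : A)).comp continuous_subtype_val, fun x => rfl⟩, ?_⟩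
    rintro F ⟨hFc, hFe⟩
    have hdense : Dense (Set.range (fun x : X => (⟨e x, subset_closure ⟨x, rfl⟩⟩ : S))) := by
      intro z
      rw [mem_closure_iff_nhds]
      intro U hU
      rcases (mem_nhds_subtype _ _ _).mp hU with ⟨V, hV, hVU⟩
      rcases mem_closure_iff_nhds.mp z.2 V hV with ⟨w, hwV, x, hx⟩
      refine ⟨⟨w, hx ▸ subset_closure ⟨x, rfl⟩⟩, hVU hwV, ⟨x, by simp [Subtype.ext_iff, hx]⟩⟩
    refine Continuous.ext_on hdense hFc
      ((continuous_apply (⟨f, hf⟩ : A)).comp continuous_subtype_val) ?_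
    rintro _ ⟨x, rfl⟩
    exact hFe x
  · -- separating points of K
    intro z w hzw
    have : (z : A → ℝ) ≠ (w : A → ℝ) := fun h => hzw (Subtype.ext h)
    rcases Function.ne_iff.mp this with ⟨a, ha⟩
    exact ⟨a, a.2, fun k => (k : A → ℝ) a,
      (continuous_apply a).comp continuous_subtype_val, fun x => rfl, ha⟩
  · -- density via Stone–Weierstrass
    intro G hG ε hε
    haveI : CompactSpace S := isCompact_iff_compactSpace.mp hS_cpt
    let B : Subalgebra ℝ C(S, ℝ) :=
      { carrier := {F | ∃ f ∈ A, ∀ x : X, F ⟨e x, subset_closure ⟨x, rfl⟩⟩ = f x}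
        mul_mem' := by
          rintro F G ⟨f, hf, hF⟩ ⟨g, hg, hG⟩
          exact ⟨f * g, mul_mem hf hg, fun x => by
            simp [hF x, hG x]⟩
        add_mem' := by
          rintro F G ⟨f, hf, hF⟩ ⟨g, hg, hG⟩
          exact ⟨f + g, add_mem hf hg, fun x => by
            simp [hF x, hG x]⟩
        one_mem' := ⟨1, one_mem A, fun x => rfl⟩
        zero_mem' := ⟨0, zero_mem A, fun x => rfl⟩
        algebraMap_mem' := fun r => ⟨algebraMap ℝ _ r, Subalgebra.algebraMap_mem A r,
          fun x => rfl⟩ }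
    have hBsep : B.SeparatesPoints := by
      intro z w hzw
      have : (z : A → ℝ) ≠ (w : A → ℝ) := fun h => hzw (Subtype.ext h)
      rcases Function.ne_iff.mp this with ⟨a, ha⟩
      exact ⟨fun k => (k : A → ℝ) a,
        ⟨⟨fun k => (k : A → ℝ) a, (continuous_apply a).comp continuous_subtype_val⟩,
          ⟨a.1, a.2, fun x => rfl⟩, rfl⟩, ha⟩
    have hBtop := ContinuousMap.subalgebra_topologicalClosure_eq_top_of_separatesPoints B hBsep
    have hGmem : (⟨G, hG⟩ : C(S, ℝ)) ∈ B.topologicalClosure := hBtop ▸ trivial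
    have hGcl : (⟨G, hG⟩ : C(S, ℝ)) ∈ closure (B : Set C(S, ℝ)) := hGmem
    rcases Metric.mem_closure_iff.mp hGcl ε hε with ⟨F, hFB, hFd⟩
    rcases hFB with ⟨f, hf, hFe⟩
    refine ⟨f, hf, F, F.continuous, hFe, fun z => ?_⟩
    have := ContinuousMap.dist_apply_le_dist (f := F) (g := (⟨G, hG⟩ : C(S, ℝ))) z
    rw [Real.dist_eq] at this
    rw [dist_comm] at hFd
    exact this.trans hFd.le
end

section
/- Let X be a topological space and let A be a subalgebra of the algebra of bounded continuous real-valued functions on X which contains the constant functions, separates the points of X, and separates points from closed sets. Let I : A → ℝ be a linear functional with I(1) = 1, |I(f)| ≤ sup_{x ∈ X} |f(x)| for all f ∈ A, and I(f) ≥ 0 whenever f ≥ 0. Then there exist a compactification (X̊, ι) of X, such that every f ∈ A has a unique continuous extension f̊ : X̊ → ℝ with f̊ ∘ ι = f, and a unique regular Borel probability measure μ̊ on X̊ such that ∫_{X̊} f̊ dμ̊ = I(f) for every f ∈ A. -/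
/-! Evaluation `x ↦ (f x)_{f ∈ A}` maps `X` into the compact cube `∏_{f ∈ A} [-‖f‖, ‖f‖]`, and it
is an embedding because `A` separates points and separates points from closed sets. The closure
`K` of its image is the compactification; each `f ∈ A` extends to `K` as a coordinate function.
The coordinates form a subalgebra of `C(K, ℝ)` that separates points, so it is dense by
Stone–Weierstrass. Hence `I` extends to a functional `Λ` on `C(K, ℝ)` with `‖Λ‖ ≤ 1` and
`Λ 1 = 1`, which is therefore positive, and the Riesz–Markov–Kakutani theorem yields `μ`.
Uniqueness of `μ` again follows from the density of the coordinates. -/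

open MeasureTheory Topology Set Filter

set_option synthInstance.maxHeartbeats 400000

theorem LinearIsometry.exists_extend_of_denseRange {𝕜 E F G : Type*} [NontriviallyNormedField 𝕜]
    [NormedAddCommGroup E] [NormedSpace 𝕜 E] [NormedAddCommGroup F] [NormedSpace 𝕜 F]
    [NormedAddCommGroup G] [NormedSpace 𝕜 G] [CompleteSpace G]
    (e : E →ₗᵢ[𝕜] F) (he : DenseRange e) (I : E →ₗ[𝕜] G) (hI : ∀ x, ‖I x‖ ≤ ‖x‖) :
    ∃ Λ : F →L[𝕜] G, ‖Λ‖ ≤ 1 ∧ ∀ x, Λ (e x) = I x := by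
  let I' := I.mkContinuous 1 fun x => by simpa using hI x
  refine ⟨I'.extend e.toContinuousLinearMap, ?_, fun x => ?_⟩
  · calc ‖I'.extend e.toContinuousLinearMap‖ ≤ 1 * ‖I'‖ :=
          ContinuousLinearMap.opNorm_extend_le (N := 1) I' he fun x => by simp
      _ ≤ 1 := by simpa using I.mkContinuous_norm_le zero_le_one _
  · exact ContinuousLinearMap.extend_eq I' he e.isometry.isUniformInducing x

section CompactSpace

open scoped CompactlySupported

variable {K : Type*} [TopologicalSpace K] [CompactSpace K]

theorem ContinuousLinearMap.map_nonneg_of_norm_le_one (Λ : C(K, ℝ) →L[ℝ] ℝ) (hΛ : ‖Λ‖ ≤ 1)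
    (h1 : Λ 1 = 1) {F : C(K, ℝ)} (hF : 0 ≤ F) : 0 ≤ Λ F := by
  have hsub : ‖‖F‖ • 1 - F‖ ≤ ‖F‖ := by
    refine (ContinuousMap.norm_le _ (norm_nonneg _)).mpr fun x => ?_
    have h0 : 0 ≤ F x := hF x
    have hle : F x ≤ ‖F‖ := (le_abs_self _).trans (F.norm_coe_le_norm x)
    simp only [ContinuousMap.sub_apply, ContinuousMap.smul_apply, ContinuousMap.one_apply,
      smul_eq_mul, mul_one, Real.norm_eq_abs]
    exact abs_le.mpr ⟨by linarith, by linarith⟩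
  have : ‖F‖ - Λ F ≤ ‖F‖ := calc
    ‖F‖ - Λ F = Λ (‖F‖ • 1 - F) := by simp [h1]
    _ ≤ ‖Λ‖ * ‖‖F‖ • 1 - F‖ := (le_abs_self _).trans (Λ.le_opNorm _)
    _ ≤ 1 * ‖F‖ := mul_le_mul hΛ hsub (norm_nonneg _) zero_le_one
    _ = ‖F‖ := one_mul _
  linarith

variable [MeasurableSpace K]

theorem integrable_continuousMap [OpensMeasurableSpace K] (μ : Measure K) [IsFiniteMeasure μ]
    (F : C(K, ℝ)) : Integrable F μ :=
  F.continuous.integrable_of_hasCompactSupport (HasCompactSupport.of_compactSpace _)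

theorem continuous_integral_continuousMap [OpensMeasurableSpace K] (μ : Measure K)
    [IsFiniteMeasure μ] : Continuous fun F : C(K, ℝ) => ∫ x, F x ∂μ := by
  refine (LipschitzWith.of_dist_le_mul (K := (μ.real univ).toNNReal)
    fun F G => ?_).continuous
  rw [Real.dist_eq, ← integral_sub (integrable_continuousMap μ F) (integrable_continuousMap μ G),
    ← Real.norm_eq_abs, dist_eq_norm, Real.coe_toNNReal _ measureReal_nonneg, mul_comm]
  exact norm_integral_le_of_norm_le_const
    (Eventually.of_forall fun x => (F - G).norm_coe_le_norm x)

variable [T2Space K] [BorelSpace K]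

theorem exists_regular_integral_eq_of_nonneg (Λ : C(K, ℝ) →ₗ[ℝ] ℝ)
    (hΛ : ∀ F, 0 ≤ F → 0 ≤ Λ F) :
    ∃ μ : Measure K, IsFiniteMeasure μ ∧ μ.Regular ∧ ∀ F : C(K, ℝ), ∫ x, F x ∂μ = Λ F := by
  let Λc : C_c(K, ℝ) →ₚ[ℝ] ℝ := PositiveLinearMap.mk₀
    { toFun := fun g => Λ g.toContinuousMap
      map_add' := fun f g => map_add Λ _ _
      map_smul' := fun c g => map_smul Λ c _ }
    fun g hg => hΛ _ hg
  refine ⟨RealRMK.rieszMeasure Λc, inferInstance, inferInstance, fun F => ?_⟩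
  exact RealRMK.integral_rieszMeasure Λc (CompactlySupportedContinuousMap.continuousMapEquiv F)

theorem exists_regular_isProbabilityMeasure_integral_eq (Λ : C(K, ℝ) →L[ℝ] ℝ) (hΛ : ‖Λ‖ ≤ 1)
    (h1 : Λ 1 = 1) : ∃ μ : Measure K, IsProbabilityMeasure μ ∧ μ.Regular ∧
      ∀ F : C(K, ℝ), ∫ x, F x ∂μ = Λ F := by
  obtain ⟨μ, hμ, hμreg, hμΛ⟩ := exists_regular_integral_eq_of_nonneg Λ.toLinearMap
    fun F hF => Λ.map_nonneg_of_norm_le_one hΛ h1 hF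
  have hμ1 : μ.real univ = 1 := by simpa [h1] using hμΛ 1
  refine ⟨μ, ⟨?_⟩, hμreg, hμΛ⟩
  rw [← ENNReal.ofReal_toReal (measure_ne_top μ univ), ← measureReal_def, hμ1, ENNReal.ofReal_one]

theorem Measure.ext_of_integral_eq_of_denseRange {μ ν : Measure K} [IsFiniteMeasure μ]
    [IsFiniteMeasure ν] [μ.Regular] [ν.Regular] {α : Type*} {e : α → C(K, ℝ)} (he : DenseRange e)
    (h : ∀ a, ∫ x, e a x ∂μ = ∫ x, e a x ∂ν) : μ = ν :=
  Measure.ext_of_integral_eq_on_compactlySupported fun g =>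
    he.induction_on (p := fun F : C(K, ℝ) => ∫ x, F x ∂μ = ∫ x, F x ∂ν) g.toContinuousMap
      (isClosed_eq (continuous_integral_continuousMap μ) (continuous_integral_continuousMap ν)) h

end CompactSpace

namespace BoundedContinuousFunction

variable {X ι : Type*} [TopologicalSpace X] (φ : ι → X →ᵇ ℝ)

def evalMap (x : X) (i : ι) : ℝ := φ i x

theorem continuous_evalMap : Continuous (evalMap φ) :=
  continuous_pi fun i => (φ i).continuous

theorem closure_range_evalMap_subset :
    closure (range (evalMap φ)) ⊆ univ.pi fun i => Icc (-‖φ i‖) ‖φ i‖ := by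
  refine closure_minimal ?_ (isClosed_set_pi fun i _ => isClosed_Icc)
  rintro _ ⟨x, rfl⟩ i -
  exact abs_le.mp ((φ i).norm_coe_le_norm x)

theorem isCompact_closure_range_evalMap : IsCompact (closure (range (evalMap φ))) :=
  (isCompact_univ_pi fun _ => isCompact_Icc).of_isClosed_subset isClosed_closure
    (closure_range_evalMap_subset φ)

theorem isEmbedding_evalMap (hpts : ∀ x y, x ≠ y → ∃ i, φ i x ≠ φ i y)
    (hclosed : ∀ C : Set X, IsClosed C → ∀ x ∉ C, ∃ i, φ i x = 1 ∧ ∀ y ∈ C, φ i y = 0) :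
    IsEmbedding (evalMap φ) := by
  refine ⟨isInducing_iff_nhds.mpr fun x =>
    le_antisymm ((continuous_evalMap φ).tendsto x).le_comap fun s hs => ?_, fun x y hxy => ?_⟩
  · obtain ⟨U, hUs, hU, hxU⟩ := mem_nhds_iff.mp hs
    obtain ⟨i, hix, hiU⟩ := hclosed Uᶜ hU.isClosed_compl x (not_not.mpr hxU)
    refine mem_comap.mpr ⟨{z | 1 / 2 < z i},
      (isOpen_lt continuous_const (continuous_apply i)).mem_nhds ?_, fun y hy => hUs ?_⟩
    · norm_num [evalMap, hix]
    · by_contra hyU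
      norm_num [evalMap, hiU y hyU] at hy
  · by_contra hne
    obtain ⟨i, hi⟩ := hpts x y hne
    exact hi (congrFun hxy i)

abbrev EvalCompactification : Type _ := closure (range (evalMap φ))

namespace EvalCompactification

instance : CompactSpace (EvalCompactification φ) :=
  isCompact_iff_compactSpace.mp (isCompact_closure_range_evalMap φ)

def embed (x : X) : EvalCompactification φ := ⟨evalMap φ x, subset_closure (mem_range_self x)⟩

theorem isEmbedding_embed (hpts : ∀ x y, x ≠ y → ∃ i, φ i x ≠ φ i y)
    (hclosed : ∀ C : Set X, IsClosed C → ∀ x ∉ C, ∃ i, φ i x = 1 ∧ ∀ y ∈ C, φ i y = 0) :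
    IsEmbedding (embed φ) :=
  (isEmbedding_evalMap φ hpts hclosed).codRestrict _ _

theorem denseRange_embed : DenseRange (embed φ) := by
  refine Subtype.dense_iff.mpr ?_
  rw [← range_comp]
  exact subset_rfl

def coord (i : ι) : C(EvalCompactification φ, ℝ) :=
  ⟨fun z => (z : ι → ℝ) i, (continuous_apply i).comp continuous_subtype_val⟩

@[simp]
theorem coord_embed (i : ι) (x : X) : coord φ i (embed φ x) = φ i x := rfl

variable {φ} in
theorem eq_of_comp_embed {F G : EvalCompactification φ → ℝ} (hF : Continuous F)
    (hG : Continuous G) (h : ∀ x, F (embed φ x) = G (embed φ x)) : F = G :=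
  (denseRange_embed φ).equalizer hF hG (funext h)

variable {φ} in
theorem continuousMap_ext {F G : C(EvalCompactification φ, ℝ)}
    (h : ∀ x, F (embed φ x) = G (embed φ x)) : F = G :=
  ContinuousMap.coe_injective (eq_of_comp_embed F.continuous G.continuous h)

theorem norm_coord (i : ι) : ‖coord φ i‖ = ‖φ i‖ := by
  refine le_antisymm ((ContinuousMap.norm_le _ (norm_nonneg _)).mpr fun z => ?_)
    ((norm_le (norm_nonneg _)).mpr fun x => ?_)
  · exact abs_le.mpr (closure_range_evalMap_subset φ z.2 i trivial)
  · rw [← coord_embed]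
    exact (coord φ i).norm_coe_le_norm _

variable (A : Subalgebra ℝ (X →ᵇ ℝ))

def coordAlgHom : A →ₐ[ℝ] C(EvalCompactification ((↑) : A → X →ᵇ ℝ), ℝ) where
  toFun := coord _
  map_one' := continuousMap_ext fun x => by simp
  map_mul' f g := continuousMap_ext fun x => by simp
  map_zero' := continuousMap_ext fun x => by simp
  map_add' f g := continuousMap_ext fun x => by simp
  commutes' r := continuousMap_ext fun x => by simp [Algebra.algebraMap_eq_smul_one]

noncomputable def coordLinearIsometry :
    A →ₗᵢ[ℝ] C(EvalCompactification ((↑) : A → X →ᵇ ℝ), ℝ) where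
  toLinearMap := (coordAlgHom A).toLinearMap
  norm_map' := norm_coord _

theorem separatesPoints_range_coordAlgHom : (coordAlgHom A).range.SeparatesPoints := by
  intro z w hzw
  obtain ⟨f, hf⟩ := Function.ne_iff.mp (Subtype.coe_ne_coe.mpr hzw)
  exact ⟨coord _ f, ⟨coord _ f, ⟨f, rfl⟩, rfl⟩, hf⟩

theorem denseRange_coordAlgHom : DenseRange (coordAlgHom A) := fun F => by
  rw [← AlgHom.coe_range]
  exact ContinuousMap.continuousMap_mem_subalgebra_closure_of_separatesPoints _
    (separatesPoints_range_coordAlgHom A) F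

end EvalCompactification

end BoundedContinuousFunction

open BoundedContinuousFunction EvalCompactification

theorem stmt_3_general {X : Type u} [TopologicalSpace X]
    (A : Subalgebra ℝ (BoundedContinuousFunction X ℝ))
    (hsepPts : ∀ x y : X, x ≠ y → ∃ f ∈ A, f x ≠ f y)
    (hsepClosed : ∀ C : Set X, IsClosed C → ∀ x ∉ C,
      ∃ f ∈ A, f x = 1 ∧ ∀ y ∈ C, f y = 0)
    (I : A →ₗ[ℝ] ℝ)
    (hI1 : I 1 = 1)
    (hIbd : ∀ f : A, |I f| ≤ ‖(f : BoundedContinuousFunction X ℝ)‖) :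
    ∃ (K : Type u) (_ : TopologicalSpace K) (_ : CompactSpace K) (_ : T2Space K)
      (_ : MeasurableSpace K) (_ : BorelSpace K) (ι : X → K),
      Topology.IsEmbedding ι ∧ DenseRange ι ∧
      (∀ f ∈ A, ∃! F : K → ℝ, Continuous F ∧ ∀ x, F (ι x) = f x) ∧
      (∃! μ : Measure K,
        IsProbabilityMeasure μ ∧ μ.Regular ∧
          ∀ (f : A) (F : K → ℝ), Continuous F →
            (∀ x, F (ι x) = (f : BoundedContinuousFunction X ℝ) x) →
            ∫ z, F z ∂μ = I f) := by
  let φ : A → X →ᵇ ℝ := (↑)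
  -- The subtype σ-algebra inherited from `A → ℝ` is not the Borel one.
  let : MeasurableSpace (EvalCompactification φ) := borel _
  have : BorelSpace (EvalCompactification φ) := ⟨rfl⟩
  obtain ⟨Λ, hΛ, hΛI⟩ := LinearIsometry.exists_extend_of_denseRange (𝕜 := ℝ) (E := A) (G := ℝ)
    (coordLinearIsometry A) (denseRange_coordAlgHom A) I hIbd
  have hΛ1 : Λ 1 = 1 := by
    rw [← map_one (coordAlgHom A), ← hI1]
    exact hΛI 1
  obtain ⟨μ, hμ, hμreg, hμΛ⟩ := exists_regular_isProbabilityMeasure_integral_eq Λ hΛ hΛ1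
  have hcoord (f : A) (F : EvalCompactification φ → ℝ) (hF : Continuous F)
      (hFf : ∀ x, F (embed φ x) = φ f x) : F = coord φ f :=
    eq_of_comp_embed hF (coord φ f).continuous hFf
  refine ⟨EvalCompactification φ, inferInstance, inferInstance, inferInstance, inferInstance,
    inferInstance, embed φ,
    isEmbedding_embed φ (fun x y hxy => ?_) (fun C hC x hx => ?_), denseRange_embed φ,
    fun f hf => ⟨coord φ ⟨f, hf⟩, ⟨(coord φ _).continuous, fun x => rfl⟩,
      fun F ⟨hF, hFf⟩ => hcoord _ F hF hFf⟩,
    μ, ⟨hμ, hμreg, fun f F hF hFf => ?_⟩, fun ν ⟨hν, hνreg, hνI⟩ => ?_⟩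
  · obtain ⟨f, hf, hfxy⟩ := hsepPts x y hxy
    exact ⟨⟨f, hf⟩, hfxy⟩
  · obtain ⟨f, hf, hfx, hfC⟩ := hsepClosed C hC x hx
    exact ⟨⟨f, hf⟩, hfx, hfC⟩
  · rw [hcoord f F hF hFf]
    exact (hμΛ _).trans (hΛI f)
  · exact Measure.ext_of_integral_eq_of_denseRange (denseRange_coordAlgHom A) fun f =>
      (hνI f _ (coordAlgHom A f).continuous fun x => rfl).trans ((hμΛ _).trans (hΛI f)).symm

/-- Let `A` be a subalgebra of the bounded continuous real functions on a
topological space `X` (hence containing constants) which separates the points of `X` and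
separates points from closed sets, and let `I : A → ℝ` be linear with `I 1 = 1`,
`|I f| ≤ ‖f‖` (sup norm) and `I f ≥ 0` for `f ≥ 0`. Then there is a compactification
`(K, ι)` of `X` on which every `f ∈ A` has a unique continuous extension, together with a
unique regular Borel probability measure `μ` on `K` for which the integral of the extension
of each `f ∈ A` equals `I f`. -/
theorem stmt_3 {X : Type u} [TopologicalSpace X]
    (A : Subalgebra ℝ (BoundedContinuousFunction X ℝ))
    (hsepPts : ∀ x y : X, x ≠ y → ∃ f ∈ A, f x ≠ f y)
    (hsepClosed : ∀ C : Set X, IsClosed C → ∀ x ∉ C,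
      ∃ f ∈ A, f x = 1 ∧ ∀ y ∈ C, f y = 0)
    (I : A →ₗ[ℝ] ℝ)
    (hI1 : I 1 = 1)
    (hIbd : ∀ f : A, |I f| ≤ ‖(f : BoundedContinuousFunction X ℝ)‖)
    (hIpos : ∀ f : A, (∀ x, 0 ≤ (f : BoundedContinuousFunction X ℝ) x) → 0 ≤ I f) :
    ∃ (K : Type u) (_ : TopologicalSpace K) (_ : CompactSpace K) (_ : T2Space K)
      (_ : MeasurableSpace K) (_ : BorelSpace K) (ι : X → K),
      Topology.IsEmbedding ι ∧ DenseRange ι ∧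
      (∀ f ∈ A, ∃! F : K → ℝ, Continuous F ∧ ∀ x, F (ι x) = f x) ∧
      (∃! μ : Measure K,
        IsProbabilityMeasure μ ∧ μ.Regular ∧
          ∀ (f : A) (F : K → ℝ), Continuous F →
            (∀ x, F (ι x) = (f : BoundedContinuousFunction X ℝ) x) →
            ∫ z, F z ∂μ = I f) :=
  stmt_3_general A hsepPts hsepClosed I hI1 hIbd
end

section
/- Let X be a topological space and let A be a subalgebra of the algebra of bounded continuous real-valued functions on X which contains the constant functions, separates the points of X, and separates points from closed sets. Let (X̊, ι) be a compactification of X such that every f ∈ A has a continuous extension f̊ : X̊ → ℝ with f̊ ∘ ι = f and such that {f̊ : f ∈ A} is dense in C(X̊, ℝ). Let I : A → ℝ be linear with I(1) = 1, |I(f)| ≤ sup_X |f| and I(f) ≥ 0 for f ≥ 0, and let μ̊ be a regular Borel probability measure on X̊ with ∫ f̊ dμ̊ = I(f) for all f ∈ A. Suppose g : X → X is a homeomorphism such that f ∘ g ∈ A and f ∘ g⁻¹ ∈ A for every f ∈ A, and that I(f ∘ g) = I(f) for every f ∈ A. Then there is a unique homeomorphism ĝ : X̊ → X̊ with ĝ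 ∘ ι = ι ∘ g, and the pushforward of μ̊ under ĝ equals μ̊. -/
/-!
The continuous extensions of the functions of `A` form a dense set `D` in `C(K, ℝ)`, so they
separate the points of `K` and `z ↦ (F z)_{F ∈ D}` is a closed embedding of `K` into `ℝ^D`.
As `A` is stable under composition with `g`, the map sending `z` to the values at `z` of the
extensions of the `F ∘ ι ∘ g` is continuous and maps the dense set `ι(X)` into the image of `K`,
hence factors through `K`: this extends `g`, and the extension of `g⁻¹` is its inverse since
both agree with the identity on `ι(X)`. Invariance of `I` says that `F ∘ ĝ` and `F` have the same
`μ`-integral for `F ∈ D`, hence for every continuous `F` by density, and a regular measure is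
determined by the integrals of continuous functions.
-/

open MeasureTheory Topology Set

section Separation

variable {K : Type*} [TopologicalSpace K]

theorem ContinuousMap.dense_of_forall_abs_sub_le [CompactSpace K] {D : Set C(K, ℝ)}
    (hD : ∀ G : C(K, ℝ), ∀ ε > 0, ∃ F ∈ D, ∀ z, |F z - G z| ≤ ε) : Dense D := by
  refine Metric.dense_iff.2 fun G r hr => ?_
  obtain ⟨F, hFD, hFG⟩ := hD G (r / 2) (half_pos hr)
  have hdist : dist F G ≤ r / 2 := (ContinuousMap.dist_le (half_pos hr).le).2 hFG
  exact ⟨F, Metric.mem_ball.2 (hdist.trans_lt (half_lt_self hr)), hFD⟩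

theorem Dense.exists_apply_ne [T35Space K] {D : Set C(K, ℝ)} (hD : Dense D) {z w : K}
    (hzw : z ≠ w) : ∃ F ∈ D, F z ≠ F w := by
  by_contra! hagree
  obtain ⟨f, hf, hfz, hfw⟩ :=
    CompletelyRegularSpace.completely_regular z {w} isClosed_singleton hzw
  let G : C(K, ℝ) := ⟨fun x => f x, continuous_subtype_val.comp hf⟩
  have hG : G z = G w := by
    have hclosed : IsClosed {F : C(K, ℝ) | F z = F w} :=
      isClosed_eq (continuous_eval_const z) (continuous_eval_const w)
    exact hclosed.closure_subset_iff.2 hagree (hD.closure_eq ▸ mem_univ G)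
  simp [G, hfz, hfw rfl] at hG

theorem Dense.isClosedEmbedding_eval [CompactSpace K] [T2Space K] {D : Set C(K, ℝ)}
    (hD : Dense D) : IsClosedEmbedding fun (z : K) (F : D) => F.1 z := by
  refine (continuous_pi fun F => F.1.continuous).isClosedEmbedding fun z w hzw => ?_
  by_contra hne
  obtain ⟨F, hFD, hF⟩ := hD.exists_apply_ne hne
  exact hF (congrFun hzw ⟨F, hFD⟩)

end Separation

theorem Topology.IsClosedEmbedding.exists_continuous_comp_eq {Y Z W : Type*}
    [TopologicalSpace Y] [TopologicalSpace Z] [TopologicalSpace W] {e : Y → Z}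
    (he : IsClosedEmbedding e) {T : W → Z} (hT : Continuous T) {s : Set W} (hs : Dense s)
    (hTs : MapsTo T s (range e)) : ∃ H : C(W, Y), e ∘ H = T := by
  have hrange : ∀ w, T w ∈ range e := by
    have hclosed : IsClosed (T ⁻¹' range e) := he.isClosed_range.preimage hT
    exact fun w => hclosed.closure_subset_iff.2 hTs (hs.closure_eq ▸ mem_univ w)
  choose H hH using hrange
  have hHT : e ∘ H = T := funext hH
  exact ⟨⟨H, he.continuous_iff.2 (hHT ▸ hT)⟩, hHT⟩

theorem DenseRange.exists_continuousMap_comp_eq {X Y K L : Type*} [TopologicalSpace K]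
    [TopologicalSpace L] [CompactSpace L] [T2Space L] {ι : X → K} {κ : Y → L}
    (hι : DenseRange ι) {D : Set C(L, ℝ)} (hD : Dense D) {h : X → Y}
    (hDh : ∀ F ∈ D, ∃ G : C(K, ℝ), ∀ x, G (ι x) = F (κ (h x))) :
    ∃ H : C(K, L), ∀ x, H (ι x) = κ (h x) := by
  have he := hD.isClosedEmbedding_eval
  choose G hG using hDh
  let T : K → (D → ℝ) := fun z F => G F.1 F.2 z
  have hT : Continuous T := continuous_pi fun F => (G F.1 F.2).continuous
  have hTι : ∀ x, T (ι x) = fun F => F.1 (κ (h x)) := fun x => funext fun F => hG F.1 F.2 x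
  obtain ⟨H, hH⟩ := he.exists_continuous_comp_eq hT hι (by
    rintro _ ⟨x, rfl⟩
    exact ⟨κ (h x), (hTι x).symm⟩)
  exact ⟨H, fun x => he.injective ((congrFun hH (ι x)).trans (hTι x))⟩

theorem DenseRange.exists_homeomorph_of_exists_continuousMap {X K : Type*} [TopologicalSpace K]
    [T2Space K] {ι : X → K} (hι : DenseRange ι) (g : X ≃ X)
    (hg : ∃ H : C(K, K), ∀ x, H (ι x) = ι (g x))
    (hg' : ∃ H : C(K, K), ∀ x, H (ι x) = ι (g.symm x)) :
    ∃ gK : K ≃ₜ K, ∀ x, gK (ι x) = ι (g x) := by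
  obtain ⟨H, hH⟩ := hg
  obtain ⟨H', hH'⟩ := hg'
  have hH'H : H' ∘ H = id :=
    hι.equalizer (H'.continuous.comp H.continuous) continuous_id
      (funext fun x => by simp [hH, hH'])
  have hHH' : H ∘ H' = id :=
    hι.equalizer (H.continuous.comp H'.continuous) continuous_id
      (funext fun x => by simp [hH, hH'])
  exact ⟨⟨⟨H, H', congrFun hH'H, congrFun hHH'⟩, H.continuous, H'.continuous⟩, hH⟩

section Integral

variable {K : Type*} [TopologicalSpace K] [CompactSpace K] [MeasurableSpace K] [BorelSpace K]

theorem ContinuousMap.continuous_integral (μ : Measure K)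
    [IsFiniteMeasure μ] : Continuous fun F : C(K, ℝ) => ∫ z, F z ∂μ := by
  have hLp : (fun F : C(K, ℝ) => ∫ z, F z ∂μ) =
      fun F => ∫ z, ContinuousMap.toLp (E := ℝ) 1 μ ℝ F z ∂μ :=
    funext fun F => integral_congr_ae (ContinuousMap.coeFn_toLp μ F).symm
  rw [hLp]
  exact MeasureTheory.continuous_integral.comp (ContinuousMap.toLp 1 μ ℝ).continuous

theorem ContinuousMap.integral_eq_of_eqOn_dense {μ ν : Measure K}
    [IsFiniteMeasure μ] [IsFiniteMeasure ν] {D : Set C(K, ℝ)} (hD : Dense D)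
    (h : ∀ F ∈ D, ∫ z, F z ∂μ = ∫ z, F z ∂ν) (F : C(K, ℝ)) :
    ∫ z, F z ∂μ = ∫ z, F z ∂ν :=
  congrFun ((ContinuousMap.continuous_integral μ).ext_on hD
    (ContinuousMap.continuous_integral ν) h) F

theorem MeasureTheory.Measure.ext_of_integral_eq_on_dense [T2Space K] {μ ν : Measure K}
    [IsFiniteMeasure μ] [IsFiniteMeasure ν] [μ.Regular] [ν.Regular] {D : Set C(K, ℝ)}
    (hD : Dense D) (h : ∀ F ∈ D, ∫ z, F z ∂μ = ∫ z, F z ∂ν) : μ = ν :=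
  Measure.ext_of_integral_eq_on_compactlySupported fun F =>
    ContinuousMap.integral_eq_of_eqOn_dense hD h F.toContinuousMap

end Integral

theorem stmt_4_general {X : Type u} [TopologicalSpace X]
    (A : Subalgebra ℝ (BoundedContinuousFunction X ℝ))
    {K : Type v} [TopologicalSpace K] [CompactSpace K] [T2Space K]
    [MeasurableSpace K] [BorelSpace K]
    (ι : X → K) (hdense : DenseRange ι)
    (hext : ∀ f ∈ A, ∃ F : K → ℝ, Continuous F ∧ ∀ x, F (ι x) = f x)
    (hextdense : ∀ G : K → ℝ, Continuous G → ∀ ε > 0, ∃ f ∈ A, ∃ F : K → ℝ,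
      Continuous F ∧ (∀ x, F (ι x) = f x) ∧ ∀ z, |F z - G z| ≤ ε)
    (I : A →ₗ[ℝ] ℝ)
    (μ : Measure K) (hprob : IsProbabilityMeasure μ) (hreg : μ.Regular)
    (hμI : ∀ (f : A) (F : K → ℝ), Continuous F →
      (∀ x, F (ι x) = (f : BoundedContinuousFunction X ℝ) x) → ∫ z, F z ∂μ = I f)
    (g : X ≃ₜ X)
    (hgA : ∀ f : A,
      (f : BoundedContinuousFunction X ℝ).compContinuous (g : C(X, X)) ∈ A)
    (hgA' : ∀ f : A,
      (f : BoundedContinuousFunction X ℝ).compContinuous (g.symm : C(X, X)) ∈ A)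
    (hIg : ∀ (f : A)
      (hf : (f : BoundedContinuousFunction X ℝ).compContinuous (g : C(X, X)) ∈ A),
      I ⟨(f : BoundedContinuousFunction X ℝ).compContinuous (g : C(X, X)), hf⟩ = I f) :
    (∃! gK : K ≃ₜ K, ∀ x, gK (ι x) = ι (g x)) ∧
      ∀ gK : K ≃ₜ K, (∀ x, gK (ι x) = ι (g x)) → Measure.map gK μ = μ := by
  let D : Set C(K, ℝ) := {F | ∃ f ∈ A, ∀ x, F (ι x) = f x}
  have hD : Dense D := ContinuousMap.dense_of_forall_abs_sub_le fun G ε hε => by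
    obtain ⟨f, hfA, F, hF, hFι, hFG⟩ := hextdense G G.continuous ε hε
    exact ⟨⟨F, hF⟩, ⟨f, hfA, hFι⟩, hFG⟩
  have hDcomp : ∀ h : X ≃ₜ X,
      (∀ f : A, (f : BoundedContinuousFunction X ℝ).compContinuous (h : C(X, X)) ∈ A) →
      ∀ F ∈ D, ∃ G : C(K, ℝ), ∀ x, G (ι x) = F (ι (h x)) := by
    rintro h hhA F ⟨f, hfA, hFι⟩
    obtain ⟨G, hG, hGι⟩ := hext _ (hhA ⟨f, hfA⟩)
    exact ⟨⟨G, hG⟩, fun x => (hGι x).trans (hFι (h x)).symm⟩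
  have hmap : ∀ gK : K ≃ₜ K, (∀ x, gK (ι x) = ι (g x)) → Measure.map gK μ = μ := by
    intro gK hgK
    have : (Measure.map gK μ).Regular := hreg.map gK
    refine Measure.ext_of_integral_eq_on_dense hD ?_
    rintro F ⟨f, hfA, hFι⟩
    rw [integral_map gK.continuous.aemeasurable F.continuous.aestronglyMeasurable,
      hμI ⟨f, hfA⟩ F F.continuous hFι, ← hIg ⟨f, hfA⟩ (hgA ⟨f, hfA⟩)]
    exact hμI _ _ (F.continuous.comp gK.continuous) fun x => by
      simp [hgK x, hFι]
  obtain ⟨gK, hgK⟩ := hdense.exists_homeomorph_of_exists_continuousMap g.toEquiv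
    (hdense.exists_continuousMap_comp_eq hD (hDcomp g hgA))
    (hdense.exists_continuousMap_comp_eq hD (hDcomp g.symm hgA'))
  refine ⟨⟨gK, hgK, fun gK' hgK' => Homeomorph.ext fun z => ?_⟩, hmap⟩
  exact congrFun (hdense.equalizer gK'.continuous gK.continuous
    (funext fun x => (hgK' x).trans (hgK x).symm)) z

/-- In the setting of the previous statements — `A` a subalgebra of bounded
continuous functions on `X` separating points and separating points from closed sets,
`(K, ι)` a compactification of `X` on which all `f ∈ A` extend continuously with extensions
dense in `C(K, ℝ)`, `I` a normalized positive linear functional on `A` bounded by the sup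
norm, and `μ` a regular Borel probability measure on `K` integrating the extensions to `I` —
if `g : X → X` is a homeomorphism with `f ∘ g ∈ A` and `f ∘ g⁻¹ ∈ A` for all `f ∈ A` and
`I (f ∘ g) = I f`, then there is a unique homeomorphism `gK` of `K` with `gK ∘ ι = ι ∘ g`,
and the pushforward of `μ` under `gK` equals `μ`. -/
theorem stmt_4 {X : Type u} [TopologicalSpace X]
    (A : Subalgebra ℝ (BoundedContinuousFunction X ℝ))
    (hsepPts : ∀ x y : X, x ≠ y → ∃ f ∈ A, f x ≠ f y)
    (hsepClosed : ∀ C : Set X, IsClosed C → ∀ x ∉ C,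
      ∃ f ∈ A, f x = 1 ∧ ∀ y ∈ C, f y = 0)
    {K : Type v} [TopologicalSpace K] [CompactSpace K] [T2Space K]
    [MeasurableSpace K] [BorelSpace K]
    (ι : X → K) (hemb : Topology.IsEmbedding ι) (hdense : DenseRange ι)
    (hext : ∀ f ∈ A, ∃ F : K → ℝ, Continuous F ∧ ∀ x, F (ι x) = f x)
    (hextdense : ∀ G : K → ℝ, Continuous G → ∀ ε > 0, ∃ f ∈ A, ∃ F : K → ℝ,
      Continuous F ∧ (∀ x, F (ι x) = f x) ∧ ∀ z, |F z - G z| ≤ ε)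
    (I : A →ₗ[ℝ] ℝ)
    (hI1 : I 1 = 1)
    (hIbd : ∀ f : A, |I f| ≤ ‖(f : BoundedContinuousFunction X ℝ)‖)
    (hIpos : ∀ f : A, (∀ x, 0 ≤ (f : BoundedContinuousFunction X ℝ) x) → 0 ≤ I f)
    (μ : Measure K) (hprob : IsProbabilityMeasure μ) (hreg : μ.Regular)
    (hμI : ∀ (f : A) (F : K → ℝ), Continuous F →
      (∀ x, F (ι x) = (f : BoundedContinuousFunction X ℝ) x) → ∫ z, F z ∂μ = I f)
    (g : X ≃ₜ X)
    (hgA : ∀ f : A,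
      (f : BoundedContinuousFunction X ℝ).compContinuous (g : C(X, X)) ∈ A)
    (hgA' : ∀ f : A,
      (f : BoundedContinuousFunction X ℝ).compContinuous (g.symm : C(X, X)) ∈ A)
    (hIg : ∀ (f : A)
      (hf : (f : BoundedContinuousFunction X ℝ).compContinuous (g : C(X, X)) ∈ A),
      I ⟨(f : BoundedContinuousFunction X ℝ).compContinuous (g : C(X, X)), hf⟩ = I f) :
    (∃! gK : K ≃ₜ K, ∀ x, gK (ι x) = ι (g x)) ∧
      ∀ gK : K ≃ₜ K, (∀ x, gK (ι x) = ι (g x)) → Measure.map gK μ = μ :=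
  stmt_4_general A ι hdense hext hextdense I μ hprob hreg hμI g hgA hgA' hIg
end

section
/- Let E be a real topological vector space and let E' be its continuous dual space equipped with the weak-* topology. Then cylindrical functions separate points from closed sets in E': for every closed subset C ⊆ E' and every T ∈ E' ∖ C, there exist m ∈ ℕ, elements f₁, …, f_m ∈ E, and a bounded continuous function F̃ : ℝ^m → ℝ with 0 ≤ F̃ ≤ 1 such that F̃(T(f₁), …, T(f_m)) = 1 while F̃(S(f₁), …, S(f_m)) = 0 for every S ∈ C. -/
/-!
A weak-* neighbourhood of `T` contains the preimage of an open set `U ⊆ ℝ^m` under finitely many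
evaluations `S ↦ (S f₁, …, S f_m)`, and Urysohn's lemma in `ℝ^m` separates the point
`(T f₁, …, T f_m)` from the closed set `Uᶜ`.
-/

open Filter Topology Set

theorem WeakDual.exists_isOpen_eval_preimage_subset_of_mem_nhds {𝕜 E : Type*} [CommSemiring 𝕜]
    [TopologicalSpace 𝕜] [ContinuousAdd 𝕜] [ContinuousConstSMul 𝕜 𝕜] [AddCommMonoid E]
    [Module 𝕜 E] [TopologicalSpace E] {T : WeakDual 𝕜 E} {N : Set (WeakDual 𝕜 E)}
    (hN : N ∈ 𝓝 T) :
    ∃ (m : ℕ) (f : Fin m → E) (U : Set (Fin m → 𝕜)), IsOpen U ∧ (fun i => T (f i)) ∈ U ∧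
      ∀ S : WeakDual 𝕜 E, (fun i => S (f i)) ∈ U → S ∈ N := by
  obtain ⟨W, hWN, hW, hTW⟩ := mem_nhds_iff.mp hN
  obtain ⟨O, hO, rfl⟩ := isOpen_induced_iff.mp hW
  obtain ⟨I, u, hu, hIO⟩ := isOpen_pi_iff.mp hO _ hTW
  let f : Fin I.card → E := fun i => I.equivFin.symm i
  refine ⟨I.card, f, univ.pi fun i => u (f i),
    isOpen_set_pi finite_univ fun i _ => (hu _ (I.equivFin.symm i).2).1,
    fun i _ => (hu _ (I.equivFin.symm i).2).2, fun S hS => hWN (hIO fun y hy => ?_)⟩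
  change S y ∈ u y
  simpa [f] using hS (I.equivFin ⟨y, hy⟩) (mem_univ _)

theorem stmt_5_general {E : Type*} [AddCommGroup E] [Module ℝ E] [TopologicalSpace E]
    (C : Set (WeakDual ℝ E)) (hC : IsClosed C) (T : WeakDual ℝ E) (hT : T ∉ C) :
    ∃ (m : ℕ) (f : Fin m → E) (F : (Fin m → ℝ) → ℝ),
      Continuous F ∧ (∀ v, F v ∈ Set.Icc (0 : ℝ) 1) ∧
      F (fun i => T (f i)) = 1 ∧ ∀ S ∈ C, F (fun i => S (f i)) = 0 := by
  obtain ⟨m, f, U, hU, hTU, hUC⟩ :=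
    WeakDual.exists_isOpen_eval_preimage_subset_of_mem_nhds (hC.isOpen_compl.mem_nhds hT)
  obtain ⟨F, hFU, hFT, hF01⟩ := exists_continuous_zero_one_of_isClosed hU.isClosed_compl
    isClosed_singleton (disjoint_singleton_right.mpr (not_not_intro hTU))
  exact ⟨m, f, F, F.continuous, hF01, hFT rfl, fun S hS => hFU fun hSU => hUC S hSU hS⟩

/-- On the continuous dual of a real topological vector space `E`, equipped
with the weak-* topology (`WeakDual ℝ E`), cylindrical functions separate points from closed
sets: for each weak-* closed set `C` and each `T ∉ C` there are finitely many
`f₁, …, f_m ∈ E` and a bounded continuous `F : ℝ^m → ℝ` with `0 ≤ F ≤ 1`,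
`F (T f₁, …, T f_m) = 1` and `F (S f₁, …, S f_m) = 0` for all `S ∈ C`. -/
theorem stmt_5 {E : Type*} [AddCommGroup E] [Module ℝ E] [TopologicalSpace E]
    [IsTopologicalAddGroup E] [ContinuousSMul ℝ E]
    (C : Set (WeakDual ℝ E)) (hC : IsClosed C) (T : WeakDual ℝ E) (hT : T ∉ C) :
    ∃ (m : ℕ) (f : Fin m → E) (F : (Fin m → ℝ) → ℝ),
      Continuous F ∧ (∀ v, F v ∈ Set.Icc (0 : ℝ) 1) ∧
      F (fun i => T (f i)) = 1 ∧ ∀ S ∈ C, F (fun i => S (f i)) = 0 :=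
  stmt_5_general C hC T hT
end

section
/- Let D ≥ 1 be an integer and let δ, A, B be real numbers with 0 < δ < A ≤ B. Then there exists R₀ > 0 such that for every R ≥ R₀ and every point (x, y) ∈ ℝ^D × ℝ with |x|² + (y − R)² = R² and y ≠ 2R, if the stereographic image u = (2R/(2R − y))·x ∈ ℝ^D satisfies u_D ≥ A and |u| ≤ B (where u_D is the D-th coordinate of u), then x_D > δ. -/
private lemma stmt_9_aux (δ A B R y n t : ℝ)
    (hδ : 0 < δ) (hA : δ < A) (hB : A ≤ B)
    (hR1 : 1 ≤ R) (hR2 : A * B ^ 2 < 4 * (A - δ) * R ^ 2)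
    (hy0 : 0 ≤ y) (hs0 : 0 < 2 * R - y)
    (hn0 : 0 ≤ n) (hn : n ^ 2 = y * (2 * R - y))
    (h1 : 2 * R * n ≤ B * (2 * R - y))
    (h2 : A * (2 * R - y) ≤ 2 * R * t) : δ < t := by
  have hB0 : 0 < B := by linarith
  have hsq : (2 * R * n) ^ 2 ≤ (B * (2 * R - y)) ^ 2 := by
    have h0 : 0 ≤ 2 * R * n := by positivity
    nlinarith
  have hexp : (2 * R * n) ^ 2 = 4 * R ^ 2 * (y * (2 * R - y)) := by
    rw [mul_pow, hn]; ring
  have hkey : 4 * R ^ 2 * y ≤ B ^ 2 * (2 * R - y) := by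
    nlinarith [sq_nonneg (2 * R - y)]
  have h3 : 4 * R ^ 2 * y ≤ B ^ 2 * (2 * R) := by nlinarith [sq_nonneg B]
  have h4 : A * (4 * R ^ 2 * y) ≤ A * (B ^ 2 * (2 * R)) :=
    mul_le_mul_of_nonneg_left h3 (by linarith)
  have h5 : A * B ^ 2 * (2 * R) < 4 * (A - δ) * R ^ 2 * (2 * R) :=
    mul_lt_mul_of_pos_right hR2 (by linarith)
  have h6 : (4 * R ^ 2) * (A * y) < (4 * R ^ 2) * (2 * R * (A - δ)) := by nlinarith
  have hAy : A * y < 2 * R * (A - δ) := lt_of_mul_lt_mul_left h6 (by positivity)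
  have h7 : (2 * R) * δ < (2 * R) * t := by nlinarith
  exact lt_of_mul_lt_mul_left h7 (by linarith)

/-- For `0 < δ < A ≤ B` there is `R₀ > 0` such that for all `R ≥ R₀` and all
points `(x, y)` of the sphere `|x|² + (y − R)² = R²` in `ℝ^D × ℝ` with `y ≠ 2R`, if the
stereographic image `u = (2R/(2R − y)) x` satisfies `u_D ≥ A` and `|u| ≤ B`, then `x_D > δ`.
Here `x_D` denotes the `D`-th (last) coordinate of `x ∈ ℝ^D`. -/
theorem stmt_9 (D : ℕ) (hD : 1 ≤ D) (δ A B : ℝ)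
    (hδ : 0 < δ) (hA : δ < A) (hB : A ≤ B) :
    ∃ R₀ > (0 : ℝ), ∀ R : ℝ, R₀ ≤ R →
      ∀ (x : EuclideanSpace ℝ (Fin D)) (y : ℝ),
        ‖x‖ ^ 2 + (y - R) ^ 2 = R ^ 2 → y ≠ 2 * R →
        A ≤ (2 * R / (2 * R - y)) * x ⟨D - 1, by omega⟩ →
        ‖(2 * R / (2 * R - y)) • x‖ ≤ B →
        δ < x ⟨D - 1, by omega⟩ := by
  refine ⟨max 1 (A * B ^ 2 / (4 * (A - δ)) + 1),
    lt_of_lt_of_le one_pos (le_max_left _ _), ?_⟩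
  intro R hR x y hsph hy hA' hB'
  have hR1 : (1 : ℝ) ≤ R := le_trans (le_max_left _ _) hR
  have hAδ : 0 < A - δ := sub_pos.mpr hA
  have hRbig : A * B ^ 2 / (4 * (A - δ)) + 1 ≤ R := le_trans (le_max_right _ _) hR
  have hR2 : A * B ^ 2 < 4 * (A - δ) * R ^ 2 := by
    have h1 : A * B ^ 2 / (4 * (A - δ)) < R := by linarith
    have h2 := (div_lt_iff₀ (by positivity : (0:ℝ) < 4 * (A - δ))).mp h1
    nlinarith [mul_nonneg (by linarith : (0:ℝ) ≤ R) (by linarith : (0:ℝ) ≤ R - 1), hAδ]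
  have hx2 : 0 ≤ ‖x‖ ^ 2 := sq_nonneg _
  have hyle : y ≤ 2 * R := by nlinarith
  have hylt : y < 2 * R := lt_of_le_of_ne hyle hy
  have hy0 : 0 ≤ y := by nlinarith
  have hs0 : 0 < 2 * R - y := by linarith
  have hnormx : ‖x‖ ^ 2 = y * (2 * R - y) := by nlinarith
  have hlam : 0 < 2 * R / (2 * R - y) := by positivity
  have hnu : 2 * R / (2 * R - y) * ‖x‖ ≤ B := by
    have := hB'
    rwa [norm_smul, Real.norm_eq_abs, abs_of_pos hlam] at this
  have hnu2 : 2 * R * ‖x‖ ≤ B * (2 * R - y) := by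
    rw [div_mul_eq_mul_div, div_le_iff₀ hs0] at hnu
    linarith
  have hkey : 4 * R ^ 2 * y ≤ B ^ 2 * (2 * R - y) := by
    have hsq : (2 * R * ‖x‖) ^ 2 ≤ (B * (2 * R - y)) ^ 2 := by
      have h0 : 0 ≤ 2 * R * ‖x‖ := by positivity
      nlinarith
    have hexp : (2 * R * ‖x‖) ^ 2 = 4 * R ^ 2 * (y * (2 * R - y)) := by
      rw [mul_pow, hnormx]; ring
    nlinarith [sq_nonneg (2 * R - y)]
  have hA2 : A * (2 * R - y) ≤ 2 * R * x ⟨D - 1, by omega⟩ := by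
    rw [div_mul_eq_mul_div, le_div_iff₀ hs0] at hA'
    linarith
  exact stmt_9_aux δ A B R y ‖x‖ _ hδ hA hB hR1 hR2 hy0 hs0 (norm_nonneg x) hnormx hnu2 hA2
end
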